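/- Let n = r₁·r₂ with integers r₁, r₂ ≥ 2, and index vertices by {0,…,n−1}. For p ∈ {0,…,r₂−1} let C_p = {i : ⌊i/r₁⌋ = p} (a block of r₁ consecutive indices), and for q ∈ {0,…,r₁−1} let Q_q = {i : i mod r₁ = q} (a stride class of r₂ indices). Then the matrix product (M_{Q_{r₁−1}}⋯M_{Q_1}·M_{Q_0})·(M_{C_{r₂−1}}⋯M_{C_1}·M_{C_0}) of the corresponding clique-averaging matrices equals (1/n)·J. -/

import Mathlib

/-!
The cliques `C p` are the fibres of `i ↦ i / r₁` and the `Q q` those of `i ↦ i % r₁`. Averaging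
matrices of disjoint cliques act on disjoint sets of rows, so the product over a partition is the
averaging matrix of that partition. Since `i ↦ (i / r₁, i % r₁)` identifies the indices with
`Fin r₂ × Fin r₁`, averaging over the first coordinate and then over the second averages over
all `n` indices.
-/

/-- The clique-averaging matrix of a subset `C` of `{0,…,n−1}`:
`(M_C)_{ij} = 1/|C|` if `i, j ∈ C`; `(M_C)_{ii} = 1` if `i ∉ C`; `0` otherwise. -/
noncomputable def avgM {n : ℕ} (C : Finset (Fin n)) : Matrix (Fin n) (Fin n) ℝ :=
  Matrix.of fun i j => if i ∈ C ∧ j ∈ C then ((C.card : ℝ))⁻¹ else if i = j then 1 else 0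

open Finset

section

variable {n : ℕ}

lemma avgM_mul_apply_of_mem {D : Finset (Fin n)} (M : Matrix (Fin n) (Fin n) ℝ) {i : Fin n}
    (hi : i ∈ D) (j : Fin n) : (avgM D * M) i j = (#D : ℝ)⁻¹ * ∑ k ∈ D, M k j := by
  have hrow (k : Fin n) : avgM D i k = if k ∈ D then (#D : ℝ)⁻¹ else 0 := by
    by_cases hk : k ∈ D
    · simp [avgM, hi, hk]
    · simp [avgM, hk, show i ≠ k by rintro rfl; exact hk hi]
  simp_rw [Matrix.mul_apply, hrow, ite_mul, zero_mul, sum_ite_mem, univ_inter, mul_sum]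

lemma avgM_mul_apply_of_notMem {D : Finset (Fin n)} (M : Matrix (Fin n) (Fin n) ℝ) {i : Fin n}
    (hi : i ∉ D) (j : Fin n) : (avgM D * M) i j = M i j := by
  simp [Matrix.mul_apply, avgM, hi]

variable {β : Type*} [DecidableEq β]

noncomputable def fiberAvgM (f : Fin n → β) : Matrix (Fin n) (Fin n) ℝ :=
  Matrix.of fun i j => if f i = f j then (#{k | f k = f i} : ℝ)⁻¹ else 0

lemma list_prod_avgM_fiber (f : Fin n → β) {L : List β} (hL : L.Nodup) :
    (L.map fun b => avgM {k | f k = b}).prod = Matrix.of fun i j =>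
      if f i ∈ L then (if f i = f j then (#{k | f k = f i} : ℝ)⁻¹ else 0)
      else if i = j then 1 else 0 := by
  induction L with
  | nil => ext i j; simp [Matrix.one_apply]
  | cons b L ih =>
    rw [List.nodup_cons] at hL
    ext i j
    rw [List.map_cons, List.prod_cons, ih hL.2]
    by_cases hi : f i = b
    · rw [avgM_mul_apply_of_mem _ (by simpa using hi)]
      have hrow (k) (hk : k ∈ ({k | f k = b} : Finset _)) :
          (if f k ∈ L then (if f k = f j then (#{l | f l = f k} : ℝ)⁻¹ else 0)
            else if k = j then 1 else 0) = if k = j then 1 else 0 := by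
        simp_all
      simp only [Matrix.of_apply]
      rw [sum_congr rfl hrow]
      simp [hi, eq_comm]
    · rw [avgM_mul_apply_of_notMem _ (by simpa using hi)]
      simp [hi]

lemma list_prod_avgM_fiber_eq_fiberAvgM (f : Fin n → β) {L : List β} (hL : L.Nodup)
    (hfL : ∀ i, f i ∈ L) : (L.map fun b => avgM {k | f k = b}).prod = fiberAvgM f := by
  rw [list_prod_avgM_fiber f hL]
  ext i j
  by_cases h : f i = f j <;> simp [fiberAvgM, h, hfL]

lemma list_prod_reverse_ofFn_avgM_fiber {m : ℕ} (f : Fin n → Fin m) :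
    (List.ofFn fun p => avgM {k | f k = p}).reverse.prod = fiberAvgM f := by
  rw [List.ofFn_eq_map, ← List.map_reverse]
  exact list_prod_avgM_fiber_eq_fiberAvgM f
    (List.nodup_reverse.mpr (List.nodup_finRange m)) (by simp)

variable {α γ : Type*} [Fintype α] [Fintype γ]

lemma card_filter_fst_eq [DecidableEq α] (a : α) : #{x : α × γ | x.1 = a} = Fintype.card γ := by
  rw [show ({x : α × γ | x.1 = a} : Finset _) = {a} ×ˢ univ by ext ⟨x, y⟩; simp [eq_comm],
    card_product]
  simp

lemma card_filter_snd_eq [DecidableEq γ] (c : γ) : #{x : α × γ | x.2 = c} = Fintype.card α := by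
  rw [show ({x : α × γ | x.2 = c} : Finset _) = univ ×ˢ {c} by ext ⟨x, y⟩; simp [eq_comm],
    card_product]
  simp

lemma fiberAvgM_snd_mul_fiberAvgM_fst [DecidableEq α] [DecidableEq γ] (e : Fin n ≃ α × γ) :
    fiberAvgM (fun k => (e k).2) * fiberAvgM (fun k => (e k).1) =
      (n : ℝ)⁻¹ • Matrix.of fun _ _ => (1 : ℝ) := by
  have hfst (a : α) : #{k | (e k).1 = a} = Fintype.card γ :=
    (card_equiv e (by simp)).trans (card_filter_fst_eq a)
  have hsnd (c : γ) : #{k | (e k).2 = c} = Fintype.card α :=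
    (card_equiv e (by simp)).trans (card_filter_snd_eq c)
  have hn : n = Fintype.card α * Fintype.card γ := by
    simpa using Fintype.card_congr e
  ext i j
  set k₀ := e.symm ((e j).1, (e i).2)
  have hterm (k : Fin n) :
      fiberAvgM (fun k => (e k).2) i k * fiberAvgM (fun k => (e k).1) k j =
        if k = k₀ then ((Fintype.card α : ℝ) * Fintype.card γ)⁻¹ else 0 := by
    have hk : k = k₀ ↔ (e i).2 = (e k).2 ∧ (e k).1 = (e j).1 := by
      rw [Equiv.eq_symm_apply, Prod.ext_iff, eq_comm (a := (e k).2)]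
      exact and_comm
    simp only [fiberAvgM, Matrix.of_apply, hsnd, hfst, hk, mul_inv_rev]
    split_ifs <;> simp_all [mul_comm]
  rw [Matrix.mul_apply, sum_congr rfl fun k _ => hterm k, sum_ite_eq']
  simp [hn]

end

theorem stmt8_general {n r₁ r₂ : ℕ} (hn : n = r₁ * r₂)
    (C : Fin r₂ → Finset (Fin n)) (Q : Fin r₁ → Finset (Fin n))
    (hC : ∀ p, C p = Finset.univ.filter (fun i : Fin n => (i : ℕ) / r₁ = (p : ℕ)))
    (hQ : ∀ q, Q q = Finset.univ.filter (fun i : Fin n => (i : ℕ) % r₁ = (q : ℕ))) :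
    (List.ofFn fun q => avgM (Q q)).reverse.prod *
        (List.ofFn fun p => avgM (C p)).reverse.prod =
      (n : ℝ)⁻¹ • Matrix.of (fun _ _ => (1 : ℝ)) := by
  let e : Fin n ≃ Fin r₂ × Fin r₁ :=
    (finCongr (hn.trans (mul_comm r₁ r₂))).trans finProdFinEquiv.symm
  obtain rfl : C = fun p => ({k | (e k).1 = p} : Finset _) :=
    funext fun p => by ext k; simp [hC, e, Fin.ext_iff]
  obtain rfl : Q = fun q => ({k | (e k).2 = q} : Finset _) :=
    funext fun q => by ext k; simp [hQ, e, Fin.ext_iff]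
  rw [list_prod_reverse_ofFn_avgM_fiber, list_prod_reverse_ofFn_avgM_fiber]
  exact fiberAvgM_snd_mul_fiberAvgM_fst e

theorem stmt8 {n r₁ r₂ : ℕ} (hr₁ : 2 ≤ r₁) (hr₂ : 2 ≤ r₂) (hn : n = r₁ * r₂)
    (C : Fin r₂ → Finset (Fin n)) (Q : Fin r₁ → Finset (Fin n))
    (hC : ∀ p, C p = Finset.univ.filter (fun i : Fin n => (i : ℕ) / r₁ = (p : ℕ)))
    (hQ : ∀ q, Q q = Finset.univ.filter (fun i : Fin n => (i : ℕ) % r₁ = (q : ℕ))) :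
    (List.ofFn fun q => avgM (Q q)).reverse.prod *
        (List.ofFn fun p => avgM (C p)).reverse.prod =
      (n : ℝ)⁻¹ • Matrix.of (fun _ _ => (1 : ℝ)) :=
  stmt8_general hn C Q hC hQ
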